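/- arXiv:1210.2737 — 3 statements merged into one kernel-verified Lean document; each statement's English description precedes it below -/
import Mathlib

section
/- Let e : A0 →ι A1 →π A2 be an extension of C*-algebras. Define: j : S(C_π) → C(C_π) the inclusion; ev₁ : C(C_π) → C_π, u ↦ u(1); ω_incl : C_{Sπ} → C_{Cπ}, (a,h) ↦ (a,h) (induced by the inclusions SA1 ⊆ CA1 and SA2 ⊆ CA2); and ω_ev : C_{Cπ} → C_π, (a,h) ↦ (a(1), s ↦ (h(s))(1)) (induced by the evaluations ev₁ : CA1 → A1 and ev₁ : CA2 → A2). Then: (1) both sequences S(C_π) →j C(C_π) →ev₁ C_π and C_{Sπ} →ω_incl C_{Cπ} →ω_ev C_π are short exact; (2) Cflip ∘ j = ω_incl ∘ Sflip as maps S(C_π) → C_{Cπ}; and (3) ω_ev ∘ Cflip = ev₁ as maps C(C_π) → C_π. In other words, the flip isomorphisms, together with the identity on C_π, constitute an isomorphism from the canonical short exact sequence of extensions 0 → S(mc(e)) → C(mc(e)) → mc(e) → 0 onto 0 → mc(Se) → mc(Ce) → mc(e) → 0. -/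
/-!
Formalization preamble: cones, suspensions, mapping cones of (non-unital) C*-algebras,
their concrete models inside algebras of continuous functions, and functors from
C*-algebras to abelian groups.
-/

set_option maxHeartbeats 1600000
set_option synthInstance.maxHeartbeats 800000

open scoped unitInterval CStarAlgebra

noncomputable section

namespace CStarPaper

variable {A B : Type*} [NonUnitalCStarAlgebra A] [NonUnitalCStarAlgebra B]

/-- The flip of a continuous function on the square `[0,1]²`. -/
def flip2 {A : Type*} [NonUnitalCStarAlgebra A] (f : C(I × I, A)) : C(I × I, A) :=
  f.comp ⟨Prod.swap, continuous_swap⟩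

@[simp] lemma flip2_apply (f : C(I × I, A)) (s t : I) : flip2 f (s, t) = f (t, s) := rfl

/-- The cone `CA = {f ∈ C([0,1],A) : f(0) = 0}` of a C*-algebra `A`. -/
def cone (A : Type*) [NonUnitalCStarAlgebra A] : NonUnitalStarSubalgebra ℂ C(I, A) where
  carrier := {f | f 0 = 0}
  add_mem' := by intro f g hf hg; simp_all [Set.mem_setOf_eq]
  zero_mem' := by simp [Set.mem_setOf_eq]
  mul_mem' := by intro f g hf hg; simp_all [Set.mem_setOf_eq]
  smul_mem' := by intro c f hf; simp_all [Set.mem_setOf_eq]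
  star_mem' := by intro f hf; simp_all [Set.mem_setOf_eq, map_star]

instance cone.isClosed (A : Type*) [NonUnitalCStarAlgebra A] :
    IsClosed ((cone A : Set C(I, A))) :=
  isClosed_eq (continuous_eval_const 0) continuous_const

/-- The suspension `SA = {f ∈ C([0,1],A) : f(0) = f(1) = 0}` of a C*-algebra `A`. -/
def susp (A : Type*) [NonUnitalCStarAlgebra A] : NonUnitalStarSubalgebra ℂ C(I, A) where
  carrier := {f | f 0 = 0 ∧ f 1 = 0}
  add_mem' := by intro f g hf hg; simp_all [Set.mem_setOf_eq]
  zero_mem' := by simp [Set.mem_setOf_eq]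
  mul_mem' := by intro f g hf hg; simp_all [Set.mem_setOf_eq]
  smul_mem' := by intro c f hf; simp_all [Set.mem_setOf_eq]
  star_mem' := by intro f hf; simp_all [Set.mem_setOf_eq, map_star]

instance susp.isClosed (A : Type*) [NonUnitalCStarAlgebra A] :
    IsClosed ((susp A : Set C(I, A))) := by
  have h : (susp A : Set C(I, A)) = {f | f 0 = 0} ∩ {f | f 1 = 0} := rfl
  rw [h]
  exact (isClosed_eq (continuous_eval_const 0) continuous_const).inter
    (isClosed_eq (continuous_eval_const 1) continuous_const)

/-- The mapping cone `C_φ = {(x,y) ∈ A ⊕ CB : φ(x) = y(1)}` of `φ : A → B`. -/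
def mapCone (φ : A →⋆ₙₐ[ℂ] B) : NonUnitalStarSubalgebra ℂ (A × C(I, B)) where
  carrier := {p | p.2 0 = 0 ∧ φ p.1 = p.2 1}
  add_mem' := by intro p q hp hq; simp_all [Set.mem_setOf_eq]
  zero_mem' := by simp [Set.mem_setOf_eq]
  mul_mem' := by intro p q hp hq; simp_all [Set.mem_setOf_eq]
  smul_mem' := by intro c p hp; simp_all [Set.mem_setOf_eq]
  star_mem' := by intro p hp; simp_all [Set.mem_setOf_eq, map_star]

instance mapCone.isClosed (φ : A →⋆ₙₐ[ℂ] B) :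
    IsClosed ((mapCone φ : Set (A × C(I, B)))) := by
  have h : (mapCone φ : Set (A × C(I, B)))
      = {p : A × C(I, B) | p.2 0 = 0} ∩ {p : A × C(I, B) | φ p.1 = p.2 1} := rfl
  rw [h]
  exact (isClosed_eq ((continuous_eval_const 0).comp continuous_snd) continuous_const).inter
    (isClosed_eq ((map_continuous φ).comp continuous_fst)
      ((continuous_eval_const 1).comp continuous_snd))

/-- The canonical inclusion `SA → CA`. -/
def suspIncl (A : Type*) [NonUnitalCStarAlgebra A] : ↥(susp A) →⋆ₙₐ[ℂ] ↥(cone A) where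
  toFun f := ⟨(f : C(I, A)), f.2.1⟩
  map_smul' _ _ := rfl
  map_zero' := rfl
  map_add' _ _ := rfl
  map_mul' _ _ := rfl
  map_star' _ := rfl

/-- Evaluation at `1`, as a *-homomorphism `CA → A`. -/
def coneEval (A : Type*) [NonUnitalCStarAlgebra A] : ↥(cone A) →⋆ₙₐ[ℂ] A where
  toFun f := (f : C(I, A)) 1
  map_smul' _ _ := rfl
  map_zero' := rfl
  map_add' _ _ := rfl
  map_mul' _ _ := rfl
  map_star' _ := rfl

/-- The canonical projection `π_mc : C_φ → A`, `(x,y) ↦ x`. -/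
def mapConeProj (φ : A →⋆ₙₐ[ℂ] B) : ↥(mapCone φ) →⋆ₙₐ[ℂ] A where
  toFun p := (p : A × C(I, B)).1
  map_smul' _ _ := rfl
  map_zero' := rfl
  map_add' _ _ := rfl
  map_mul' _ _ := rfl
  map_star' _ := rfl

/-- The projection `C_φ → CB`, `(x,y) ↦ y`. -/
def mapConeSnd (φ : A →⋆ₙₐ[ℂ] B) : ↥(mapCone φ) →⋆ₙₐ[ℂ] ↥(cone B) where
  toFun p := ⟨(p : A × C(I, B)).2, p.2.1⟩
  map_smul' _ _ := rfl
  map_zero' := rfl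
  map_add' _ _ := rfl
  map_mul' _ _ := rfl
  map_star' _ := rfl

/-- The canonical inclusion `ι_mc : SB → C_φ`, `g ↦ (0,g)`. -/
def mapConeIncl (φ : A →⋆ₙₐ[ℂ] B) : ↥(susp B) →⋆ₙₐ[ℂ] ↥(mapCone φ) where
  toFun g := ⟨(0, (g : C(I, B))), ⟨g.2.1, by simp [g.2.2]⟩⟩
  map_smul' c g := Subtype.ext (by simp [Prod.ext_iff])
  map_zero' := Subtype.ext (by simp [Prod.ext_iff])
  map_add' g h := Subtype.ext (by simp [Prod.ext_iff])
  map_mul' g h := Subtype.ext (by simp [Prod.ext_iff])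
  map_star' g := Subtype.ext (by simp [Prod.ext_iff])

/-- The concrete model of the suspension `S(C_φ)` of a mapping cone, inside
`C([0,1],A) × C([0,1]²,B)`. -/
def suspMapConeModel (φ : A →⋆ₙₐ[ℂ] B) :
    NonUnitalStarSubalgebra ℂ (C(I, A) × C(I × I, B)) where
  carrier := {p | p.1 0 = 0 ∧ p.1 1 = 0 ∧ (∀ t, p.2 (0, t) = 0) ∧ (∀ t, p.2 (1, t) = 0) ∧
    (∀ s, p.2 (s, 0) = 0) ∧ ∀ s, φ (p.1 s) = p.2 (s, 1)}
  add_mem' := by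
    rintro p q ⟨h1, h2, h3, h4, h5, h6⟩ ⟨g1, g2, g3, g4, g5, g6⟩
    exact ⟨by simp [h1, g1], by simp [h2, g2], fun t => by simp [h3 t, g3 t],
      fun t => by simp [h4 t, g4 t], fun s => by simp [h5 s, g5 s],
      fun s => by simp [h6 s, g6 s]⟩
  zero_mem' := ⟨by simp, by simp, fun t => by simp, fun t => by simp, fun s => by simp,
    fun s => by simp⟩
  mul_mem' := by
    rintro p q ⟨h1, h2, h3, h4, h5, h6⟩ ⟨g1, g2, g3, g4, g5, g6⟩
    exact ⟨by simp [h1, g1], by simp [h2, g2], fun t => by simp [h3 t, g3 t],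
      fun t => by simp [h4 t, g4 t], fun s => by simp [h5 s, g5 s],
      fun s => by simp [h6 s, g6 s]⟩
  smul_mem' := by
    rintro c p ⟨h1, h2, h3, h4, h5, h6⟩
    exact ⟨by simp [h1], by simp [h2], fun t => by simp [h3 t],
      fun t => by simp [h4 t], fun s => by simp [h5 s], fun s => by simp [h6 s]⟩
  star_mem' := by
    rintro p ⟨h1, h2, h3, h4, h5, h6⟩
    exact ⟨by simp [h1], by simp [h2], fun t => by simp [h3 t],
      fun t => by simp [h4 t], fun s => by simp [h5 s], fun s => by simp [map_star, h6 s]⟩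

/-- The concrete model of the mapping cone `C_{Sφ}` of the suspension of `φ`, inside
`C([0,1],A) × C([0,1]²,B)`. -/
def mapConeSuspModel (φ : A →⋆ₙₐ[ℂ] B) :
    NonUnitalStarSubalgebra ℂ (C(I, A) × C(I × I, B)) where
  carrier := {p | p.1 0 = 0 ∧ p.1 1 = 0 ∧ (∀ t, p.2 (0, t) = 0) ∧ (∀ s, p.2 (s, 0) = 0) ∧
    (∀ s, p.2 (s, 1) = 0) ∧ ∀ t, φ (p.1 t) = p.2 (1, t)}
  add_mem' := by
    rintro p q ⟨h1, h2, h3, h4, h5, h6⟩ ⟨g1, g2, g3, g4, g5, g6⟩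
    exact ⟨by simp [h1, g1], by simp [h2, g2], fun t => by simp [h3 t, g3 t],
      fun s => by simp [h4 s, g4 s], fun s => by simp [h5 s, g5 s],
      fun t => by simp [h6 t, g6 t]⟩
  zero_mem' := ⟨by simp, by simp, fun t => by simp, fun s => by simp, fun s => by simp,
    fun t => by simp⟩
  mul_mem' := by
    rintro p q ⟨h1, h2, h3, h4, h5, h6⟩ ⟨g1, g2, g3, g4, g5, g6⟩
    exact ⟨by simp [h1, g1], by simp [h2, g2], fun t => by simp [h3 t, g3 t],
      fun s => by simp [h4 s, g4 s], fun s => by simp [h5 s, g5 s],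
      fun t => by simp [h6 t, g6 t]⟩
  smul_mem' := by
    rintro c p ⟨h1, h2, h3, h4, h5, h6⟩
    exact ⟨by simp [h1], by simp [h2], fun t => by simp [h3 t],
      fun s => by simp [h4 s], fun s => by simp [h5 s], fun t => by simp [h6 t]⟩
  star_mem' := by
    rintro p ⟨h1, h2, h3, h4, h5, h6⟩
    exact ⟨by simp [h1], by simp [h2], fun t => by simp [h3 t],
      fun s => by simp [h4 s], fun s => by simp [h5 s], fun t => by simp [map_star, h6 t]⟩

/-- The concrete model of the cone `C(C_φ)` of a mapping cone, inside
`C([0,1],A) × C([0,1]²,B)`. -/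
def coneMapConeModel (φ : A →⋆ₙₐ[ℂ] B) :
    NonUnitalStarSubalgebra ℂ (C(I, A) × C(I × I, B)) where
  carrier := {p | p.1 0 = 0 ∧ (∀ t, p.2 (0, t) = 0) ∧ (∀ s, p.2 (s, 0) = 0) ∧
    ∀ s, φ (p.1 s) = p.2 (s, 1)}
  add_mem' := by
    rintro p q ⟨h1, h3, h5, h6⟩ ⟨g1, g3, g5, g6⟩
    exact ⟨by simp [h1, g1], fun t => by simp [h3 t, g3 t], fun s => by simp [h5 s, g5 s],
      fun s => by simp [h6 s, g6 s]⟩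
  zero_mem' := ⟨by simp, fun t => by simp, fun s => by simp, fun s => by simp⟩
  mul_mem' := by
    rintro p q ⟨h1, h3, h5, h6⟩ ⟨g1, g3, g5, g6⟩
    exact ⟨by simp [h1, g1], fun t => by simp [h3 t, g3 t], fun s => by simp [h5 s, g5 s],
      fun s => by simp [h6 s, g6 s]⟩
  smul_mem' := by
    rintro c p ⟨h1, h3, h5, h6⟩
    exact ⟨by simp [h1], fun t => by simp [h3 t], fun s => by simp [h5 s],
      fun s => by simp [h6 s]⟩
  star_mem' := by
    rintro p ⟨h1, h3, h5, h6⟩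
    exact ⟨by simp [h1], fun t => by simp [h3 t], fun s => by simp [h5 s],
      fun s => by simp [map_star, h6 s]⟩

/-- The concrete model of the mapping cone `C_{Cφ}` of the cone of `φ`, inside
`C([0,1],A) × C([0,1]²,B)`. -/
def mapConeConeModel (φ : A →⋆ₙₐ[ℂ] B) :
    NonUnitalStarSubalgebra ℂ (C(I, A) × C(I × I, B)) where
  carrier := {p | p.1 0 = 0 ∧ (∀ t, p.2 (0, t) = 0) ∧ (∀ s, p.2 (s, 0) = 0) ∧
    ∀ t, φ (p.1 t) = p.2 (1, t)}
  add_mem' := by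
    rintro p q ⟨h1, h3, h5, h6⟩ ⟨g1, g3, g5, g6⟩
    exact ⟨by simp [h1, g1], fun t => by simp [h3 t, g3 t], fun s => by simp [h5 s, g5 s],
      fun t => by simp [h6 t, g6 t]⟩
  zero_mem' := ⟨by simp, fun t => by simp, fun s => by simp, fun t => by simp⟩
  mul_mem' := by
    rintro p q ⟨h1, h3, h5, h6⟩ ⟨g1, g3, g5, g6⟩
    exact ⟨by simp [h1, g1], fun t => by simp [h3 t, g3 t], fun s => by simp [h5 s, g5 s],
      fun t => by simp [h6 t, g6 t]⟩
  smul_mem' := by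
    rintro c p ⟨h1, h3, h5, h6⟩
    exact ⟨by simp [h1], fun t => by simp [h3 t], fun s => by simp [h5 s],
      fun t => by simp [h6 t]⟩
  star_mem' := by
    rintro p ⟨h1, h3, h5, h6⟩
    exact ⟨by simp [h1], fun t => by simp [h3 t], fun s => by simp [h5 s],
      fun t => by simp [map_star, h6 t]⟩

variable {X Y₁ Y₂ Z : Type*} [NonUnitalCStarAlgebra X] [NonUnitalCStarAlgebra Y₁]
  [NonUnitalCStarAlgebra Y₂] [NonUnitalCStarAlgebra Z]

/-- The canonical concrete realization of the double mapping cone associated to a commuting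
square `ψ₁ ∘ φ₁ = ψ₂ ∘ φ₂`, inside `X × C([0,1],Y₁) × C([0,1],Y₂) × C([0,1]²,Z)`. -/
def dblCone (φ₁ : X →⋆ₙₐ[ℂ] Y₁) (φ₂ : X →⋆ₙₐ[ℂ] Y₂) (ψ₁ : Y₁ →⋆ₙₐ[ℂ] Z) (ψ₂ : Y₂ →⋆ₙₐ[ℂ] Z) :
    NonUnitalStarSubalgebra ℂ (X × C(I, Y₁) × C(I, Y₂) × C(I × I, Z)) where
  carrier := {p | p.2.1 0 = 0 ∧ p.2.2.1 0 = 0 ∧ (∀ t, p.2.2.2 (0, t) = 0) ∧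
    (∀ s, p.2.2.2 (s, 0) = 0) ∧ φ₁ p.1 = p.2.1 1 ∧ φ₂ p.1 = p.2.2.1 1 ∧
    (∀ t, ψ₁ (p.2.1 t) = p.2.2.2 (1, t)) ∧ ∀ s, ψ₂ (p.2.2.1 s) = p.2.2.2 (s, 1)}
  add_mem' := by
    rintro p q ⟨h1, h2, h3, h4, h5, h6, h7, h8⟩ ⟨g1, g2, g3, g4, g5, g6, g7, g8⟩
    exact ⟨by simp [h1, g1], by simp [h2, g2], fun t => by simp [h3 t, g3 t],
      fun s => by simp [h4 s, g4 s], by simp [h5, g5], by simp [h6, g6],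
      fun t => by simp [h7 t, g7 t], fun s => by simp [h8 s, g8 s]⟩
  zero_mem' := ⟨by simp, by simp, fun t => by simp, fun s => by simp, by simp, by simp,
    fun t => by simp, fun s => by simp⟩
  mul_mem' := by
    rintro p q ⟨h1, h2, h3, h4, h5, h6, h7, h8⟩ ⟨g1, g2, g3, g4, g5, g6, g7, g8⟩
    exact ⟨by simp [h1, g1], by simp [h2, g2], fun t => by simp [h3 t, g3 t],
      fun s => by simp [h4 s, g4 s], by simp [h5, g5], by simp [h6, g6],
      fun t => by simp [h7 t, g7 t], fun s => by simp [h8 s, g8 s]⟩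
  smul_mem' := by
    rintro c p ⟨h1, h2, h3, h4, h5, h6, h7, h8⟩
    exact ⟨by simp [h1], by simp [h2], fun t => by simp [h3 t], fun s => by simp [h4 s],
      by simp [h5], by simp [h6], fun t => by simp [h7 t], fun s => by simp [h8 s]⟩
  star_mem' := by
    rintro p ⟨h1, h2, h3, h4, h5, h6, h7, h8⟩
    exact ⟨by simp [h1], by simp [h2], fun t => by simp [h3 t], fun s => by simp [h4 s],
      by simp [map_star, h5], by simp [map_star, h6], fun t => by simp [map_star, h7 t],
      fun s => by simp [map_star, h8 s]⟩

/-- The pullback of two *-homomorphisms with common codomain, as a *-subalgebra of the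
direct sum. -/
def pullbackAlg {B₂ C₁ C₂ : Type*} [NonUnitalCStarAlgebra B₂] [NonUnitalCStarAlgebra C₁]
    [NonUnitalCStarAlgebra C₂] (v : B₂ →⋆ₙₐ[ℂ] C₂) (w : C₁ →⋆ₙₐ[ℂ] C₂) :
    NonUnitalStarSubalgebra ℂ (B₂ × C₁) where
  carrier := {p | v p.1 = w p.2}
  add_mem' := by intro p q hp hq; simp_all [Set.mem_setOf_eq]
  zero_mem' := by simp [Set.mem_setOf_eq]
  mul_mem' := by intro p q hp hq; simp_all [Set.mem_setOf_eq]
  smul_mem' := by intro c p hp; simp_all [Set.mem_setOf_eq]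
  star_mem' := by intro p hp; simp_all [Set.mem_setOf_eq, map_star]

/-- `ι, π` form a short exact sequence. -/
def IsShortExact {A₀ A₁ A₂ : Type*}
    [NonUnitalNonAssocSemiring A₀] [NonUnitalNonAssocSemiring A₁] [NonUnitalNonAssocSemiring A₂]
    [DistribMulAction ℂ A₀] [DistribMulAction ℂ A₁] [DistribMulAction ℂ A₂]
    [Star A₀] [Star A₁] [Star A₂]
    (ι : A₀ →⋆ₙₐ[ℂ] A₁) (π : A₁ →⋆ₙₐ[ℂ] A₂) : Prop :=
  Function.Injective ι ∧ Function.Surjective π ∧ Set.range ι = {b | π b = 0}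

/-!
Both inclusions are the identity on the underlying pairs of functions, and an element of
`C(C_π)` (resp. `C_{Cπ}`) is killed by evaluation exactly when it also vanishes on the edge
`s = 1` (resp. `t = 1`), i.e. lies in `S(C_π)` (resp. `C_{Sπ}`). Evaluation `C(C_π) → C_π` is
surjective because `C_π` is contractible, and `ω_ev` inherits surjectivity from
`ω_ev ∘ Cflip = ev₁`.
-/

theorem isShortExact_of_val_eq {E M : Type*} [NonUnitalNonAssocSemiring E] [Module ℂ E] [Star E]
    [NonUnitalNonAssocSemiring M] [DistribMulAction ℂ M] [Star M]
    {S T : NonUnitalStarSubalgebra ℂ E} (j : S →⋆ₙₐ[ℂ] T) (ev : T →⋆ₙₐ[ℂ] M)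
    (hj : ∀ p, (j p).val = p.val) (hev : Function.Surjective ev)
    (hker : ∀ u, ev u = 0 ↔ u.val ∈ S) : IsShortExact j ev := by
  refine ⟨fun p q hpq => Subtype.ext ?_, hev, Set.ext fun u => ⟨?_, fun hu => ?_⟩⟩
  · rw [← hj p, ← hj q, hpq]
  · rintro ⟨p, rfl⟩
    exact (hker _).2 (hj p ▸ p.2)
  · exact ⟨⟨u.val, (hker u).1 hu⟩, Subtype.ext (hj _)⟩

section

variable {φ : A →⋆ₙₐ[ℂ] B}

lemma mapCone_ext_iff {p q : mapCone φ} :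
    p = q ↔ p.val.1 = q.val.1 ∧ ∀ t, p.val.2 t = q.val.2 t := by
  rw [← Subtype.val_inj, Prod.ext_iff, ContinuousMap.ext_iff]

lemma mem_suspMapConeModel_iff {p : C(I, A) × C(I × I, B)} :
    p ∈ suspMapConeModel φ ↔ p ∈ coneMapConeModel φ ∧ p.1 1 = 0 ∧ ∀ t, p.2 (1, t) = 0 := by
  change _ ∧ _ ↔ (_ ∧ _) ∧ _
  tauto

lemma mem_mapConeSuspModel_iff {p : C(I, A) × C(I × I, B)} :
    p ∈ mapConeSuspModel φ ↔ p ∈ mapConeConeModel φ ∧ p.1 1 = 0 ∧ ∀ s, p.2 (s, 1) = 0 := by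
  change _ ∧ _ ↔ (_ ∧ _) ∧ _
  tauto

lemma coneMapConeModel_eval_eq_zero_iff (ev : coneMapConeModel φ →⋆ₙₐ[ℂ] mapCone φ)
    (hev : ∀ u, (ev u).val.1 = u.val.1 1 ∧ ∀ t, (ev u).val.2 t = u.val.2 (1, t))
    (u : coneMapConeModel φ) : ev u = 0 ↔ u.val ∈ suspMapConeModel φ := by
  simp only [mapCone_ext_iff, ZeroMemClass.coe_zero, Prod.fst_zero, Prod.snd_zero,
    ContinuousMap.zero_apply, (hev u).1, (hev u).2, mem_suspMapConeModel_iff, u.2, true_and]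

lemma mapConeConeModel_eval_eq_zero_iff (ev : mapConeConeModel φ →⋆ₙₐ[ℂ] mapCone φ)
    (hev : ∀ p, (ev p).val.1 = p.val.1 1 ∧ ∀ s, (ev p).val.2 s = p.val.2 (s, 1))
    (p : mapConeConeModel φ) : ev p = 0 ↔ p.val ∈ mapConeSuspModel φ := by
  simp only [mapCone_ext_iff, ZeroMemClass.coe_zero, Prod.fst_zero, Prod.snd_zero,
    ContinuousMap.zero_apply, (hev p).1, (hev p).2, mem_mapConeSuspModel_iff, p.2, true_and]

/-- Each `p ∈ C_φ` is the value at `1` of the path `s ↦ s • p`. -/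
lemma coneMapConeModel_eval_surjective (ev : coneMapConeModel φ →⋆ₙₐ[ℂ] mapCone φ)
    (hev : ∀ u, (ev u).val.1 = u.val.1 1 ∧ ∀ t, (ev u).val.2 t = u.val.2 (1, t)) :
    Function.Surjective ev := by
  rintro ⟨⟨x, y⟩, hy0, hy1⟩
  let xPath : C(I, A) := ⟨fun s => ((s : ℝ) : ℂ) • x, by fun_prop⟩
  let yCone : C(I × I, B) := ⟨fun st => ((st.1 : ℝ) : ℂ) • y st.2, by fun_prop⟩
  have hmem : (xPath, yCone) ∈ coneMapConeModel φ :=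
    ⟨by simp [xPath], fun t => by simp [yCone], fun s => by simp [yCone, hy0],
      fun s => by simp only [xPath, yCone, ContinuousMap.coe_mk, map_smul, hy1]⟩
  refine ⟨⟨_, hmem⟩, ?_⟩
  simp [mapCone_ext_iff, (hev _).1, (hev _).2, xPath, yCone]

end

theorem statement1_general
    {A₁ A₂ : Type*}
    [NonUnitalCStarAlgebra A₁] [NonUnitalCStarAlgebra A₂]
    (π : A₁ →⋆ₙₐ[ℂ] A₂)
    -- the inclusion `j : S(C_π) → C(C_π)`
    (j : ↥(suspMapConeModel π) →⋆ₙₐ[ℂ] ↥(coneMapConeModel π))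
    (hj : ∀ p, (j p).val = p.val)
    -- evaluation at 1, `ev₁ : C(C_π) → C_π`
    (ev₁ : ↥(coneMapConeModel π) →⋆ₙₐ[ℂ] ↥(mapCone π))
    (hev₁ : ∀ u, (ev₁ u).val.1 = u.val.1 1 ∧ ∀ t, (ev₁ u).val.2 t = u.val.2 (1, t))
    -- the inclusion `ω_incl : C_{Sπ} → C_{Cπ}`
    (ωincl : ↥(mapConeSuspModel π) →⋆ₙₐ[ℂ] ↥(mapConeConeModel π))
    (hωincl : ∀ p, (ωincl p).val = p.val)
    -- the evaluation `ω_ev : C_{Cπ} → C_π`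
    (ωev : ↥(mapConeConeModel π) →⋆ₙₐ[ℂ] ↥(mapCone π))
    (hωev : ∀ p, (ωev p).val.1 = p.val.1 1 ∧ ∀ s, (ωev p).val.2 s = p.val.2 (s, 1))
    -- the two flip isomorphisms
    (sflip : ↥(suspMapConeModel π) →⋆ₙₐ[ℂ] ↥(mapConeSuspModel π))
    (hsflip : ∀ p, (sflip p).val = (p.val.1, flip2 p.val.2))
    (cflip : ↥(coneMapConeModel π) →⋆ₙₐ[ℂ] ↥(mapConeConeModel π))
    (hcflip : ∀ p, (cflip p).val = (p.val.1, flip2 p.val.2)) :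
    -- (1) both sequences are short exact
    IsShortExact j ev₁ ∧ IsShortExact ωincl ωev ∧
    -- (2) the flips intertwine the inclusions
    (∀ p, cflip (j p) = ωincl (sflip p)) ∧
    -- (3) the flips intertwine the evaluations
    ∀ u, ωev (cflip u) = ev₁ u := by
  have flip_incl : ∀ p, cflip (j p) = ωincl (sflip p) := fun p =>
    Subtype.ext (by rw [hcflip, hj, hωincl, hsflip])
  have flip_eval : ∀ u, ωev (cflip u) = ev₁ u := by
    intro u
    simp [mapCone_ext_iff, (hωev _).1, (hωev _).2, hcflip, (hev₁ u).1, (hev₁ u).2]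
  have ev₁_surjective := coneMapConeModel_eval_surjective ev₁ hev₁
  have ωev_surjective : Function.Surjective ωev :=
    Function.Surjective.of_comp (g := cflip) (by simpa [Function.comp_def, flip_eval])
  exact ⟨isShortExact_of_val_eq j ev₁ hj ev₁_surjective
      (coneMapConeModel_eval_eq_zero_iff ev₁ hev₁),
    isShortExact_of_val_eq ωincl ωev hωincl ωev_surjective
      (mapConeConeModel_eval_eq_zero_iff ωev hωev),
    flip_incl, flip_eval⟩

/-- The canonical short exact sequence `0 → S(mc(e)) → C(mc(e)) → mc(e) → 0`
is isomorphic, via the flip isomorphisms and the identity on `C_π`, to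
`0 → mc(Se) → mc(Ce) → mc(e) → 0`. -/
theorem statement1
    {A₀ A₁ A₂ : Type*}
    [NonUnitalCStarAlgebra A₀] [NonUnitalCStarAlgebra A₁] [NonUnitalCStarAlgebra A₂]
    (ι : A₀ →⋆ₙₐ[ℂ] A₁) (π : A₁ →⋆ₙₐ[ℂ] A₂) (he : IsShortExact ι π)
    -- the inclusion `j : S(C_π) → C(C_π)`
    (j : ↥(suspMapConeModel π) →⋆ₙₐ[ℂ] ↥(coneMapConeModel π))
    (hj : ∀ p, (j p).val = p.val)
    -- evaluation at 1, `ev₁ : C(C_π) → C_π`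
    (ev₁ : ↥(coneMapConeModel π) →⋆ₙₐ[ℂ] ↥(mapCone π))
    (hev₁ : ∀ u, (ev₁ u).val.1 = u.val.1 1 ∧ ∀ t, (ev₁ u).val.2 t = u.val.2 (1, t))
    -- the inclusion `ω_incl : C_{Sπ} → C_{Cπ}`
    (ωincl : ↥(mapConeSuspModel π) →⋆ₙₐ[ℂ] ↥(mapConeConeModel π))
    (hωincl : ∀ p, (ωincl p).val = p.val)
    -- the evaluation `ω_ev : C_{Cπ} → C_π`
    (ωev : ↥(mapConeConeModel π) →⋆ₙₐ[ℂ] ↥(mapCone π))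
    (hωev : ∀ p, (ωev p).val.1 = p.val.1 1 ∧ ∀ s, (ωev p).val.2 s = p.val.2 (s, 1))
    -- the two flip isomorphisms
    (sflip : ↥(suspMapConeModel π) →⋆ₙₐ[ℂ] ↥(mapConeSuspModel π))
    (hsflip : ∀ p, (sflip p).val = (p.val.1, flip2 p.val.2))
    (cflip : ↥(coneMapConeModel π) →⋆ₙₐ[ℂ] ↥(mapConeConeModel π))
    (hcflip : ∀ p, (cflip p).val = (p.val.1, flip2 p.val.2)) :
    -- (1) both sequences are short exact
    IsShortExact j ev₁ ∧ IsShortExact ωincl ωev ∧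
    -- (2) the flips intertwine the inclusions
    (∀ p, cflip (j p) = ωincl (sflip p)) ∧
    -- (3) the flips intertwine the evaluations
    ∀ u, ωev (cflip u) = ev₁ u :=
  statement1_general π j hj ev₁ hev₁ ωincl hωincl ωev hωev sflip hsflip cflip hcflip

end CStarPaper
end
end

section
/- The isomorphism ξ_y : C_{mc(y)} ≅ mc(C_y): Assume a 3×3 diagram (row form) of C*-algebras with exact rows A_i →x_i B_i →y_i C_i (i = 0,1,2) and exact columns A0 →ι_A A1 →π_A A2, B0 →ι_B B1 →π_B B2, C0 →ι_C C1 →π_C C2, all squares commuting. Set Q := {(x, f2, f1, h) ∈ B1 ⊕ CB2 ⊕ CC1 ⊕ C([0,1]²,C2) : h(0,·) = 0, h(·,0) = 0, π_B(x) = f2(1), y1(x) = f1(1), y2(f2(t)) = h(1,t), π_C(f1(s)) = h(s,1)} (the canonical realization of the double mapping cone C_{C_{π_B}→C_{π_C}}) and Q′ := {(x, f1, f2, h) ∈ B1 ⊕ CC1 ⊕ CB2 ⊕ C([0,1]²,C2) : h(0,·) = 0, h(·,0) = 0, y1(x) = f1(1), π_B(x) = f2(1), π_C(f1(s)) = h(1,s),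 y2(f2(t)) = h(t,1)} (the canonical realization of C_{C_{y1}→C_{y2}}). Then: (1) the map Ξ : Q → Q′, (x, f2, f1, h) ↦ (x, f1, f2, flip(h)), is a *-isomorphism; (2) the sequences C_{Sy2} →((f2,h) ↦ (0,f2,0,h)) Q →((x,f2,f1,h) ↦ (x,f1)) C_{y1} and S(C_{y2}) →((f2,h) ↦ (0,0,f2,h)) Q′ →((x,f1,f2,h) ↦ (x,f1)) C_{y1} are short exact, where C_{Sy2} = {(f2,h) ∈ SB2 ⊕ C([0,1]²,C2) : h(0,·) = 0, h(·,0) = h(·,1) = 0, y2(f2(t)) = h(1,t)} and S(C_{y2}) = {(f2,h) ∈ SB2 ⊕ C([0,1]²,C2) : h(0,·) = h(1,·) = 0, h(·,0) = 0, y2(f2(s)) = h(s,1)}; and (3) Ξ restricts on the ideals to the S-flip (f2,h) ↦ (f2, flip(h)) : C_{Sy2} → S(C_{y2}) and induces the identity on the common quotient C_{y1}. Thus Ξ is an isomorphism of extensions from C_{mc(y)} onto mc(C_y). -/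
/-!
Formalization preamble: cones, suspensions, mapping cones of (non-unital) C*-algebras,
their concrete models inside algebras of continuous functions, and functors from
C*-algebras to abelian groups.
-/

set_option maxHeartbeats 1600000
set_option synthInstance.maxHeartbeats 800000

open scoped unitInterval CStarAlgebra

noncomputable section

namespace CStarPaper

variable {A B : Type*} [NonUnitalCStarAlgebra A] [NonUnitalCStarAlgebra B]

variable {X Y₁ Y₂ Z : Type*} [NonUnitalCStarAlgebra X] [NonUnitalCStarAlgebra Y₁]
  [NonUnitalCStarAlgebra Y₂] [NonUnitalCStarAlgebra Z]

/-!
`Ξ` merely swaps the two cone coordinates and flips `h`, so the second sequence is the image of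
the first under `Ξ` and the S-flip; this gives exactness of the second sequence and (3) at once.
Exactness of the first sequence is formal except for surjectivity onto `C_{y₁}`: `(x, f)` lifts
to `(x, t ↦ t • π_B x, f, (s, t) ↦ t • π_C (f s))`, which lies in `Q` because
`y₂ ∘ π_B = π_C ∘ y₁`.
-/

lemma IsShortExact.congr_equiv {A₀ A₁ A₂ A₀' A₁' : Type*}
    [NonUnitalNonAssocSemiring A₀] [NonUnitalNonAssocSemiring A₁] [NonUnitalNonAssocSemiring A₂]
    [NonUnitalNonAssocSemiring A₀'] [NonUnitalNonAssocSemiring A₁']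
    [DistribMulAction ℂ A₀] [DistribMulAction ℂ A₁] [DistribMulAction ℂ A₂]
    [DistribMulAction ℂ A₀'] [DistribMulAction ℂ A₁']
    [Star A₀] [Star A₁] [Star A₂] [Star A₀'] [Star A₁']
    {ι : A₀ →⋆ₙₐ[ℂ] A₁} {π : A₁ →⋆ₙₐ[ℂ] A₂} (h : IsShortExact ι π)
    (e₀ : A₀ ≃⋆ₐ[ℂ] A₀') (e₁ : A₁ ≃⋆ₐ[ℂ] A₁') :
    IsShortExact ((e₁ : A₁ →⋆ₙₐ[ℂ] A₁').comp (ι.comp (e₀.symm : A₀' →⋆ₙₐ[ℂ] A₀)))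
      (π.comp (e₁.symm : A₁' →⋆ₙₐ[ℂ] A₁)) := by
  obtain ⟨hι, hπ, hker⟩ := h
  refine ⟨e₁.injective.comp (hι.comp e₀.symm.injective), hπ.comp e₁.symm.surjective, ?_⟩
  ext b
  constructor
  · rintro ⟨a, rfl⟩
    simpa using hker.subset ⟨_, rfl⟩
  · intro hb
    obtain ⟨a, ha⟩ := hker.superset hb
    exact ⟨e₀ a, by simp [ha]⟩

def mapConeSuspEquivSuspMapCone (φ : A →⋆ₙₐ[ℂ] B) :
    ↥(mapConeSuspModel φ) ≃⋆ₐ[ℂ] ↥(suspMapConeModel φ) where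
  toFun p := ⟨(p.1.1, flip2 p.1.2), by
    obtain ⟨h1, h2, h3, h4, h5, h6⟩ := p.2
    exact ⟨h1, h2, h4, h5, h3, h6⟩⟩
  invFun p := ⟨(p.1.1, flip2 p.1.2), by
    obtain ⟨h1, h2, h3, h4, h5, h6⟩ := p.2
    exact ⟨h1, h2, h5, h3, h4, h6⟩⟩
  left_inv _ := rfl
  right_inv _ := rfl
  map_mul' _ _ := rfl
  map_add' _ _ := rfl
  map_smul' _ _ := rfl
  map_star' _ := rfl

namespace dblCone

variable (φ₁ : X →⋆ₙₐ[ℂ] Y₁) (φ₂ : X →⋆ₙₐ[ℂ] Y₂) (ψ₁ : Y₁ →⋆ₙₐ[ℂ] Z) (ψ₂ : Y₂ →⋆ₙₐ[ℂ] Z)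

def swap : ↥(dblCone φ₁ φ₂ ψ₁ ψ₂) ≃⋆ₐ[ℂ] ↥(dblCone φ₂ φ₁ ψ₂ ψ₁) where
  toFun q := ⟨(q.1.1, q.1.2.2.1, q.1.2.1, flip2 q.1.2.2.2), by
    obtain ⟨h1, h2, h3, h4, h5, h6, h7, h8⟩ := q.2
    exact ⟨h2, h1, h4, h3, h6, h5, h8, h7⟩⟩
  invFun q := ⟨(q.1.1, q.1.2.2.1, q.1.2.1, flip2 q.1.2.2.2), by
    obtain ⟨h1, h2, h3, h4, h5, h6, h7, h8⟩ := q.2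
    exact ⟨h2, h1, h4, h3, h6, h5, h8, h7⟩⟩
  left_inv _ := rfl
  right_inv _ := rfl
  map_mul' _ _ := rfl
  map_add' _ _ := rfl
  map_smul' _ _ := rfl
  map_star' _ := rfl

def inclMapConeSusp : ↥(mapConeSuspModel ψ₁) →⋆ₙₐ[ℂ] ↥(dblCone φ₁ φ₂ ψ₁ ψ₂) where
  toFun g := ⟨(0, g.1.1, 0, g.1.2), by
    obtain ⟨h1, h2, h3, h4, h5, h6⟩ := g.2
    exact ⟨h1, rfl, h3, h4, by simp [h2], by simp, h6, fun s => by simp [h5 s]⟩⟩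
  map_smul' _ _ := Subtype.ext (by simp)
  map_zero' := rfl
  map_add' _ _ := Subtype.ext (by simp)
  map_mul' _ _ := Subtype.ext (by simp)
  map_star' _ := Subtype.ext (by simp [Prod.ext_iff])

def toMapCone : ↥(dblCone φ₁ φ₂ ψ₁ ψ₂) →⋆ₙₐ[ℂ] ↥(mapCone φ₂) where
  toFun q := ⟨(q.1.1, q.1.2.2.1), q.2.2.1, q.2.2.2.2.2.2.1⟩
  map_smul' _ _ := rfl
  map_zero' := rfl
  map_add' _ _ := rfl
  map_mul' _ _ := rfl
  map_star' _ := rfl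

variable {φ₁ φ₂ ψ₁ ψ₂}

def ofMapCone (hsq : ∀ x, ψ₁ (φ₁ x) = ψ₂ (φ₂ x)) (m : mapCone φ₂) : dblCone φ₁ φ₂ ψ₁ ψ₂ :=
  ⟨(m.1.1, ⟨fun t => ((t : ℝ) : ℂ) • φ₁ m.1.1, by fun_prop⟩, m.1.2,
    ⟨fun p => ((p.2 : ℝ) : ℂ) • ψ₂ (m.1.2 p.1), by fun_prop⟩), by
    obtain ⟨hm0, hm1⟩ := m.2
    refine ⟨by simp, hm0, fun t => by simp [hm0], fun s => by simp, by simp, hm1,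
      fun t => ?_, fun s => by simp⟩
    change ψ₁ (((t : ℝ) : ℂ) • φ₁ m.1.1) = ((t : ℝ) : ℂ) • ψ₂ (m.1.2 1)
    rw [map_smul, hsq, hm1]⟩

lemma toMapCone_surjective (hsq : ∀ x, ψ₁ (φ₁ x) = ψ₂ (φ₂ x)) :
    Function.Surjective (toMapCone φ₁ φ₂ ψ₁ ψ₂) :=
  fun m => ⟨ofMapCone hsq m, rfl⟩

lemma inclMapConeSusp_injective : Function.Injective (inclMapConeSusp φ₁ φ₂ ψ₁ ψ₂) := by
  intro g g' hgg'
  have h := congrArg Subtype.val hgg'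
  exact Subtype.ext (Prod.ext (congrArg (fun p => p.2.1) h) (congrArg (fun p => p.2.2.2) h))

lemma range_inclMapConeSusp :
    Set.range (inclMapConeSusp φ₁ φ₂ ψ₁ ψ₂) = {q | toMapCone φ₁ φ₂ ψ₁ ψ₂ q = 0} := by
  ext q
  constructor
  · rintro ⟨g, rfl⟩
    rfl
  · intro hq
    obtain ⟨hx, hf⟩ : q.1.1 = 0 ∧ q.1.2.2.1 = 0 := Prod.ext_iff.mp (congrArg Subtype.val hq)
    obtain ⟨h1, -, h3, h4, h5, -, h7, h8⟩ := q.2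
    refine ⟨⟨(q.1.2.1, q.1.2.2.2), h1, by rw [← h5, hx, map_zero], h3, h4, fun s => ?_, h7⟩, ?_⟩
    · rw [← h8 s, hf, ContinuousMap.zero_apply, map_zero]
    · exact Subtype.ext (Prod.ext hx.symm (Prod.ext rfl (Prod.ext hf.symm rfl)))

lemma isShortExact (hsq : ∀ x, ψ₁ (φ₁ x) = ψ₂ (φ₂ x)) :
    IsShortExact (inclMapConeSusp φ₁ φ₂ ψ₁ ψ₂) (toMapCone φ₁ φ₂ ψ₁ ψ₂) :=
  ⟨inclMapConeSusp_injective, toMapCone_surjective hsq, range_inclMapConeSusp⟩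

end dblCone

theorem statement4_general
    {B₁ B₂ C₁ C₂ : Type*}
    [NonUnitalCStarAlgebra B₁] [NonUnitalCStarAlgebra B₂]
    [NonUnitalCStarAlgebra C₁] [NonUnitalCStarAlgebra C₂]
    -- exact rows
    (y₁ : B₁ →⋆ₙₐ[ℂ] C₁)
    (y₂ : B₂ →⋆ₙₐ[ℂ] C₂)
    -- exact columns
    (πB : B₁ →⋆ₙₐ[ℂ] B₂)
    (πC : C₁ →⋆ₙₐ[ℂ] C₂)
    -- commuting squares
    (hsq₄ : ∀ p, y₂ (πB p) = πC (y₁ p)) :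
    -- with `Q = dblCone πB y₁ y₂ πC` the canonical realization of `C_{C_{π_B} → C_{π_C}}`
    -- and `Q' = dblCone y₁ πB πC y₂` the canonical realization of `C_{C_{y₁} → C_{y₂}}`:
    ∃ (Ξ : ↥(dblCone πB y₁ y₂ πC) ≃⋆ₐ[ℂ] ↥(dblCone y₁ πB πC y₂))
      (ι₁ : ↥(mapConeSuspModel y₂) →⋆ₙₐ[ℂ] ↥(dblCone πB y₁ y₂ πC))
      (π₁ : ↥(dblCone πB y₁ y₂ πC) →⋆ₙₐ[ℂ] ↥(mapCone y₁))
      (ι₂ : ↥(suspMapConeModel y₂) →⋆ₙₐ[ℂ] ↥(dblCone y₁ πB πC y₂))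
      (π₂ : ↥(dblCone y₁ πB πC y₂) →⋆ₙₐ[ℂ] ↥(mapCone y₁))
      (sflip : ↥(mapConeSuspModel y₂) →⋆ₙₐ[ℂ] ↥(suspMapConeModel y₂)),
      -- (1) `Ξ : (x, f₂, f₁, h) ↦ (x, f₁, f₂, flip h)` is a *-isomorphism `Q ≅ Q'`
      (∀ q, (Ξ q).val = (q.val.1, q.val.2.2.1, q.val.2.1, flip2 q.val.2.2.2)) ∧
      -- the canonical maps of the two sequences
      (∀ w, (ι₁ w).val = (0, w.val.1, 0, w.val.2)) ∧
      (∀ q, (π₁ q).val = (q.val.1, q.val.2.2.1)) ∧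
      (∀ w, (ι₂ w).val = (0, 0, w.val.1, w.val.2)) ∧
      (∀ q, (π₂ q).val = (q.val.1, q.val.2.1)) ∧
      -- the S-flip `C_{Sy₂} → S(C_{y₂})`
      (∀ w, (sflip w).val = (w.val.1, flip2 w.val.2)) ∧
      -- (2) both sequences are short exact
      IsShortExact ι₁ π₁ ∧ IsShortExact ι₂ π₂ ∧
      -- (3) `Ξ` restricts to the S-flip on the ideals and to the identity on the quotient
      (∀ w, Ξ (ι₁ w) = ι₂ (sflip w)) ∧ ∀ q, π₂ (Ξ q) = π₁ q := by
  have exact₁ := dblCone.isShortExact hsq₄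
  exact ⟨dblCone.swap πB y₁ y₂ πC, _, _, _, _, mapConeSuspEquivSuspMapCone y₂,
    fun _ => rfl, fun _ => rfl, fun _ => rfl, fun _ => rfl, fun _ => rfl, fun _ => rfl,
    exact₁, exact₁.congr_equiv (mapConeSuspEquivSuspMapCone y₂) (dblCone.swap πB y₁ y₂ πC),
    fun _ => rfl, fun _ => rfl⟩

/-- The isomorphism `ξ_y : C_{mc(y)} ≅ mc(C_y)` for a 3×3 diagram. -/
theorem statement4
    {A₀ A₁ A₂ B₀ B₁ B₂ C₀ C₁ C₂ : Type*}
    [NonUnitalCStarAlgebra A₀] [NonUnitalCStarAlgebra A₁] [NonUnitalCStarAlgebra A₂]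
    [NonUnitalCStarAlgebra B₀] [NonUnitalCStarAlgebra B₁] [NonUnitalCStarAlgebra B₂]
    [NonUnitalCStarAlgebra C₀] [NonUnitalCStarAlgebra C₁] [NonUnitalCStarAlgebra C₂]
    -- exact rows
    (x₀ : A₀ →⋆ₙₐ[ℂ] B₀) (y₀ : B₀ →⋆ₙₐ[ℂ] C₀) (hr₀ : IsShortExact x₀ y₀)
    (x₁ : A₁ →⋆ₙₐ[ℂ] B₁) (y₁ : B₁ →⋆ₙₐ[ℂ] C₁) (hr₁ : IsShortExact x₁ y₁)
    (x₂ : A₂ →⋆ₙₐ[ℂ] B₂) (y₂ : B₂ →⋆ₙₐ[ℂ] C₂) (hr₂ : IsShortExact x₂ y₂)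
    -- exact columns
    (ιA : A₀ →⋆ₙₐ[ℂ] A₁) (πA : A₁ →⋆ₙₐ[ℂ] A₂) (hcA : IsShortExact ιA πA)
    (ιB : B₀ →⋆ₙₐ[ℂ] B₁) (πB : B₁ →⋆ₙₐ[ℂ] B₂) (hcB : IsShortExact ιB πB)
    (ιC : C₀ →⋆ₙₐ[ℂ] C₁) (πC : C₁ →⋆ₙₐ[ℂ] C₂) (hcC : IsShortExact ιC πC)
    -- commuting squares
    (hsq₁ : ∀ p, x₁ (ιA p) = ιB (x₀ p)) (hsq₂ : ∀ p, x₂ (πA p) = πB (x₁ p))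
    (hsq₃ : ∀ p, y₁ (ιB p) = ιC (y₀ p)) (hsq₄ : ∀ p, y₂ (πB p) = πC (y₁ p)) :
    -- with `Q = dblCone πB y₁ y₂ πC` the canonical realization of `C_{C_{π_B} → C_{π_C}}`
    -- and `Q' = dblCone y₁ πB πC y₂` the canonical realization of `C_{C_{y₁} → C_{y₂}}`:
    ∃ (Ξ : ↥(dblCone πB y₁ y₂ πC) ≃⋆ₐ[ℂ] ↥(dblCone y₁ πB πC y₂))
      (ι₁ : ↥(mapConeSuspModel y₂) →⋆ₙₐ[ℂ] ↥(dblCone πB y₁ y₂ πC))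
      (π₁ : ↥(dblCone πB y₁ y₂ πC) →⋆ₙₐ[ℂ] ↥(mapCone y₁))
      (ι₂ : ↥(suspMapConeModel y₂) →⋆ₙₐ[ℂ] ↥(dblCone y₁ πB πC y₂))
      (π₂ : ↥(dblCone y₁ πB πC y₂) →⋆ₙₐ[ℂ] ↥(mapCone y₁))
      (sflip : ↥(mapConeSuspModel y₂) →⋆ₙₐ[ℂ] ↥(suspMapConeModel y₂)),
      -- (1) `Ξ : (x, f₂, f₁, h) ↦ (x, f₁, f₂, flip h)` is a *-isomorphism `Q ≅ Q'`
      (∀ q, (Ξ q).val = (q.val.1, q.val.2.2.1, q.val.2.1, flip2 q.val.2.2.2)) ∧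
      -- the canonical maps of the two sequences
      (∀ w, (ι₁ w).val = (0, w.val.1, 0, w.val.2)) ∧
      (∀ q, (π₁ q).val = (q.val.1, q.val.2.2.1)) ∧
      (∀ w, (ι₂ w).val = (0, 0, w.val.1, w.val.2)) ∧
      (∀ q, (π₂ q).val = (q.val.1, q.val.2.1)) ∧
      -- the S-flip `C_{Sy₂} → S(C_{y₂})`
      (∀ w, (sflip w).val = (w.val.1, flip2 w.val.2)) ∧
      -- (2) both sequences are short exact
      IsShortExact ι₁ π₁ ∧ IsShortExact ι₂ π₂ ∧
      -- (3) `Ξ` restricts to the S-flip on the ideals and to the identity on the quotient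
      (∀ w, Ξ (ι₁ w) = ι₂ (sflip w)) ∧ ∀ q, π₂ (Ξ q) = π₁ q :=
  statement4_general y₁ y₂ πB πC hsq₄

end CStarPaper
end
end

section
/- Exactness of the mapping cone functor on short exact sequences of extensions: Assume a 3×3 diagram (row form) of C*-algebras with exact rows A_i →x_i B_i →y_i C_i (i = 0,1,2) and exact columns A0 →ι_A A1 →π_A A2, B0 →ι_B B1 →π_B B2, C0 →ι_C C1 →π_C C2, all squares commuting. Then the induced *-homomorphisms on mapping cones ω_x : C_{π_A} → C_{π_B}, (a, h) ↦ (x_1(a), x_2∘h), and ω_y : C_{π_B} → C_{π_C}, (b, h) ↦ (y_1(b), y_2∘h), form a short exact sequence: ω_x is injective, ω_y is surjective, and range ω_x = ker ω_y. -/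
/-!
Formalization preamble: cones, suspensions, mapping cones of (non-unital) C*-algebras,
their concrete models inside algebras of continuous functions, and functors from
C*-algebras to abelian groups.
-/

set_option maxHeartbeats 1600000
set_option synthInstance.maxHeartbeats 800000

open scoped unitInterval CStarAlgebra

noncomputable section

namespace CStarPaper

variable {A B : Type*} [NonUnitalCStarAlgebra A] [NonUnitalCStarAlgebra B]

variable {X Y₁ Y₂ Z : Type*} [NonUnitalCStarAlgebra X] [NonUnitalCStarAlgebra Y₁]
  [NonUnitalCStarAlgebra Y₂] [NonUnitalCStarAlgebra Z]

/-!
Injectivity of `ωx` and exactness in the middle are checked componentwise; for the latter, a path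
in the range of the injective *-homomorphism `x₂` lifts continuously because `x₂` is isometric.
Surjectivity of `ωy` rests on two facts. A diagram chase in the 3×3 diagram shows that
`B₁ → C₁ ×_{C₂} B₂` is onto. And continuous paths lift along any surjective bounded operator
between Banach spaces: the open mapping theorem gives pointwise lifts of controlled norm, a
partition of unity glues them into a continuous lift up to an error of half the norm, and
iterating this approximation converges.
-/

open Function Filter Topology Metric

theorem _root_.AddMonoidHom.surjective_of_exists_approx_preimage {E F : Type*}
    [NormedAddCommGroup E] [CompleteSpace E] [NormedAddCommGroup F]
    (f : E →+ F) (hf : Continuous f) {C : ℝ}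
    (hC : ∀ y, ∃ x, ‖y - f x‖ ≤ ‖y‖ / 2 ∧ ‖x‖ ≤ C * ‖y‖) : Surjective f := by
  choose u hu using hC
  intro y
  let r : ℕ → F := fun n => (fun z => z - f (u z))^[n] y
  have hr : ∀ n, ‖r n‖ ≤ ‖y‖ * (1 / 2) ^ n := by
    intro n
    induction n with
    | zero => simp [r]
    | succ n ih =>
      calc ‖r (n + 1)‖ ≤ ‖r n‖ / 2 := by
            simpa only [r, iterate_succ_apply'] using (hu (r n)).1
        _ ≤ ‖y‖ * (1 / 2) ^ (n + 1) := by rw [pow_succ]; linarith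
  have hsum : Summable fun n => u (r n) := by
    refine .of_norm_bounded (summable_geometric_two.mul_left (|C| * ‖y‖)) fun n => ?_
    calc ‖u (r n)‖ ≤ |C| * ‖r n‖ := (hu (r n)).2.trans (by gcongr; exact le_abs_self C)
      _ ≤ |C| * (‖y‖ * (1 / 2) ^ n) := by gcongr; exact hr n
      _ = |C| * ‖y‖ * (1 / 2) ^ n := by ring
  have hpartial : ∀ n, f (∑ i ∈ Finset.range n, u (r i)) = y - r n := by
    intro n
    induction n with
    | zero => simp [r]
    | succ n ih =>
      rw [Finset.sum_range_succ, map_add, ih]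
      simp only [r, iterate_succ_apply']
      abel
  have hr0 : Tendsto r atTop (𝓝 0) := by
    rw [tendsto_zero_iff_norm_tendsto_zero]
    refine squeeze_zero (fun n => norm_nonneg _) hr ?_
    simpa using (tendsto_pow_atTop_nhds_zero_of_lt_one (by norm_num : (0:ℝ) ≤ 1 / 2)
      (by norm_num)).const_mul ‖y‖
  refine ⟨∑' n, u (r n), tendsto_nhds_unique ((hf.tendsto _).comp hsum.hasSum.tendsto_sum_nat) ?_⟩
  simpa [Function.comp_def, hpartial] using (tendsto_const_nhds (x := y)).sub hr0

section

variable {K E F : Type*} [TopologicalSpace K] [CompactSpace K] [T2Space K]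
  [NormedAddCommGroup E] [NormedSpace ℝ E] [CompleteSpace E]
  [NormedAddCommGroup F] [NormedSpace ℝ F] [CompleteSpace F]

theorem _root_.ContinuousLinearMap.exists_approx_preimage_compLeftContinuous (π : E →L[ℝ] F)
    (hπ : Surjective π) : ∃ C, ∀ h : C(K, F), ∃ k : C(K, E),
      ‖h - π.compLeftContinuous ℝ K k‖ ≤ ‖h‖ / 2 ∧ ‖k‖ ≤ C * ‖h‖ := by
  obtain ⟨C, hC0, hC⟩ := π.exists_preimage_norm_le hπ
  refine ⟨C + 1, fun h => ?_⟩
  rcases eq_or_ne h 0 with rfl | hne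
  · exact ⟨0, by simp⟩
  have hpos : 0 < ‖h‖ := norm_pos_iff.mpr hne
  obtain ⟨k, hk⟩ := exists_continuous_forall_mem_convex_of_local_const
    (t := fun x => π ⁻¹' ball (h x) (‖h‖ / 2) ∩ ball 0 ((C + 1) * ‖h‖))
    (fun x => ((convex_ball _ _).linear_preimage π.toLinearMap).inter (convex_ball _ _))
    fun x => by
      obtain ⟨e, he, hen⟩ := hC (h x)
      have hex : ‖e‖ < (C + 1) * ‖h‖ := by
        nlinarith [h.norm_coe_le_norm x]
      refine ⟨e, ?_⟩
      filter_upwards [(h.continuous.tendsto x).eventually (ball_mem_nhds (h x) (half_pos hpos))]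
        with y hy
      exact ⟨by simpa [he, dist_comm] using hy, by simpa using hex⟩
  simp only [Set.mem_inter_iff, Set.mem_preimage, mem_ball, dist_eq_norm', zero_sub,
    norm_neg] at hk
  have hCh : 0 ≤ (C + 1) * ‖h‖ := by positivity
  refine ⟨k, ?_, ?_⟩
  · exact (ContinuousMap.norm_le _ (by positivity)).2 fun x => (hk x).1.le
  · exact (ContinuousMap.norm_le _ hCh).2 fun x => (hk x).2.le

theorem _root_.ContinuousLinearMap.surjective_compLeftContinuous (π : E →L[ℝ] F)
    (hπ : Surjective π) : Surjective (π.compLeftContinuous ℝ K) :=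
  let ⟨_, hC⟩ := π.exists_approx_preimage_compLeftContinuous (K := K) hπ
  AddMonoidHom.surjective_of_exists_approx_preimage
    (π.compLeftContinuous ℝ K : C(K, E) →+ C(K, F)) (π.compLeftContinuous ℝ K).continuous hC

end

theorem _root_.NonUnitalStarAlgHom.exists_continuousMap_comp_eq {K E F : Type*}
    [TopologicalSpace K] [CompactSpace K] [T2Space K]
    [NonUnitalCStarAlgebra E] [NonUnitalCStarAlgebra F]
    (π : E →⋆ₙₐ[ℂ] F) (hπ : Surjective π) (h : C(K, F)) : ∃ k : C(K, E), ∀ x, π (k x) = h x :=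
  let πℝ : E →L[ℝ] F :=
    ({ (π : E →ₗ[ℂ] F) with cont := map_continuous π } : E →L[ℂ] F).restrictScalars ℝ
  let ⟨k, hk⟩ := πℝ.surjective_compLeftContinuous hπ h
  ⟨k, fun x => DFunLike.congr_fun hk x⟩

theorem _root_.Topology.IsEmbedding.exists_continuousMap_comp_eq {α β γ : Type*}
    [TopologicalSpace α] [TopologicalSpace β] [TopologicalSpace γ] {f : β → γ}
    (hf : IsEmbedding f) (g : C(α, γ))
    (hg : ∀ x, g x ∈ Set.range f) : ∃ k : C(α, β), ∀ x, f (k x) = g x := by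
  choose k hk using hg
  have hfk : f ∘ k = g := funext hk
  exact ⟨⟨k, hf.continuous_iff.2 (hfk ▸ g.continuous)⟩, hk⟩

section

variable {A₁ A₂ B₀ B₁ B₂ C₀ C₁ C₂ : Type*}
  [NonUnitalCStarAlgebra A₁] [NonUnitalCStarAlgebra A₂] [NonUnitalCStarAlgebra B₀]
  [NonUnitalCStarAlgebra B₁] [NonUnitalCStarAlgebra B₂] [NonUnitalCStarAlgebra C₀]
  [NonUnitalCStarAlgebra C₁] [NonUnitalCStarAlgebra C₂]
  {φ : A₁ →⋆ₙₐ[ℂ] A₂} {ψ : B₁ →⋆ₙₐ[ℂ] B₂} {χ : C₁ →⋆ₙₐ[ℂ] C₂}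

theorem mapCone.ext {p q : mapCone φ} (h₁ : p.val.1 = q.val.1) (h₂ : ∀ t, p.val.2 t = q.val.2 t) :
    p = q :=
  Subtype.ext (Prod.ext h₁ (ContinuousMap.ext h₂))

def IsInducedMapConeHom (ω : mapCone φ →⋆ₙₐ[ℂ] mapCone ψ) (f₁ : A₁ →⋆ₙₐ[ℂ] B₁)
    (f₂ : A₂ →⋆ₙₐ[ℂ] B₂) : Prop :=
  ∀ p : mapCone φ, (ω p).val.1 = f₁ p.val.1 ∧ ∀ t, (ω p).val.2 t = f₂ (p.val.2 t)

namespace IsInducedMapConeHom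

variable {ω : mapCone φ →⋆ₙₐ[ℂ] mapCone ψ} {f₁ : A₁ →⋆ₙₐ[ℂ] B₁} {f₂ : A₂ →⋆ₙₐ[ℂ] B₂}

theorem injective (hω : IsInducedMapConeHom ω f₁ f₂) (hf₁ : Injective f₁) (hf₂ : Injective f₂) :
    Injective ω := fun p q hpq =>
  mapCone.ext (hf₁ <| by rw [← (hω p).1, ← (hω q).1, hpq])
    fun t => hf₂ <| by rw [← (hω p).2, ← (hω q).2, hpq]

theorem surjective (hω : IsInducedMapConeHom ω f₁ f₂) (hf₂ : Surjective f₂)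
    (hpullback : ∀ b₁ a₂, ψ b₁ = f₂ a₂ → ∃ a₁, f₁ a₁ = b₁ ∧ φ a₁ = a₂) : Surjective ω := by
  rintro ⟨⟨b, l⟩, hl₀, hl₁⟩
  obtain ⟨k₀, hk₀⟩ := f₂.exists_continuousMap_comp_eq hf₂ l
  -- elements of the cone vanish at `0`
  let k : C(I, A₂) := k₀ - ContinuousMap.const I (k₀ 0)
  have hk : ∀ t, f₂ (k t) = l t := fun t => by
    simp [k, hk₀, hl₀]
  obtain ⟨a, ha, hφa⟩ := hpullback b (k 1) (by rw [hk, ← hl₁])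
  exact ⟨⟨(a, k), by simp [k], hφa⟩,
    mapCone.ext (by rw [(hω _).1, ha]) fun t => ((hω _).2 t).trans (hk t)⟩

theorem range_eq_ker {ω' : mapCone ψ →⋆ₙₐ[ℂ] mapCone χ} {g₁ : B₁ →⋆ₙₐ[ℂ] C₁}
    {g₂ : B₂ →⋆ₙₐ[ℂ] C₂} (hω : IsInducedMapConeHom ω f₁ f₂) (hω' : IsInducedMapConeHom ω' g₁ g₂)
    (hfg₁ : Set.range f₁ = {b | g₁ b = 0}) (hfg₂ : Set.range f₂ = {b | g₂ b = 0})
    (hf₂ : Injective f₂) (hsq : ∀ a, f₂ (φ a) = ψ (f₁ a)) :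
    Set.range ω = {p | ω' p = 0} := by
  ext p
  constructor
  · rintro ⟨r, rfl⟩
    refine mapCone.ext ?_ fun t => ?_
    · rw [(hω' _).1, (hω r).1]
      exact hfg₁.subset ⟨_, rfl⟩
    · rw [(hω' _).2, (hω r).2]
      exact hfg₂.subset ⟨_, rfl⟩
  · intro hp
    obtain ⟨a, ha⟩ : p.val.1 ∈ Set.range f₁ := by
      rw [hfg₁]
      simpa [(hω' p).1] using congr_arg (fun q => q.val.1) hp
    obtain ⟨k, hk⟩ := (NonUnitalStarAlgHom.isometry f₂ hf₂).isEmbedding.exists_continuousMap_comp_eq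
      p.val.2 fun t => by
        rw [hfg₂]
        simpa [(hω' p).2] using congr_arg (fun q => q.val.2 t) hp
    obtain ⟨hp₀, hp₁⟩ := p.2
    refine ⟨⟨(a, k), hf₂ (by rw [hk, hp₀, map_zero]), hf₂ (by rw [hk, hsq, ha, hp₁])⟩,
      mapCone.ext (by rw [(hω _).1, ha]) fun t => ((hω _).2 t).trans (hk t)⟩

end IsInducedMapConeHom

theorem exists_preimage_of_pullback {y₀ : B₀ →⋆ₙₐ[ℂ] C₀} {y₁ : B₁ →⋆ₙₐ[ℂ] C₁}
    {y₂ : B₂ →⋆ₙₐ[ℂ] C₂} {ιB : B₀ →⋆ₙₐ[ℂ] B₁} {ιC : C₀ →⋆ₙₐ[ℂ] C₁}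
    (hy₀ : Surjective y₀) (hB : IsShortExact ιB ψ) (hC : IsShortExact ιC χ)
    (hsq₀ : ∀ b, y₁ (ιB b) = ιC (y₀ b)) (hsq₂ : ∀ b, y₂ (ψ b) = χ (y₁ b))
    (c : C₁) (b₂ : B₂) (h : χ c = y₂ b₂) : ∃ b, y₁ b = c ∧ ψ b = b₂ := by
  obtain ⟨b, rfl⟩ := hB.2.1 b₂
  obtain ⟨c₀, hc₀⟩ : c - y₁ b ∈ Set.range ιC := by
    rw [hC.2.2]
    simp [h, hsq₂]
  obtain ⟨b₀, rfl⟩ := hy₀ c₀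
  have hψ : ψ (ιB b₀) = 0 := hB.2.2.subset ⟨b₀, rfl⟩
  exact ⟨b + ιB b₀, by rw [map_add, hsq₀, hc₀, add_sub_cancel], by rw [map_add, hψ, add_zero]⟩

end

theorem statement15_general {A₀ A₁ A₂ B₀ B₁ B₂ C₀ C₁ C₂ : Type*}
    [NonUnitalCStarAlgebra A₀] [NonUnitalCStarAlgebra A₁] [NonUnitalCStarAlgebra A₂]
    [NonUnitalCStarAlgebra B₀] [NonUnitalCStarAlgebra B₁] [NonUnitalCStarAlgebra B₂]
    [NonUnitalCStarAlgebra C₀] [NonUnitalCStarAlgebra C₁] [NonUnitalCStarAlgebra C₂]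
    -- exact rows
    (x₀ : A₀ →⋆ₙₐ[ℂ] B₀) (y₀ : B₀ →⋆ₙₐ[ℂ] C₀) (hr₀ : IsShortExact x₀ y₀)
    (x₁ : A₁ →⋆ₙₐ[ℂ] B₁) (y₁ : B₁ →⋆ₙₐ[ℂ] C₁) (hr₁ : IsShortExact x₁ y₁)
    (x₂ : A₂ →⋆ₙₐ[ℂ] B₂) (y₂ : B₂ →⋆ₙₐ[ℂ] C₂) (hr₂ : IsShortExact x₂ y₂)
    -- exact columns
    (πA : A₁ →⋆ₙₐ[ℂ] A₂)
    (ιB : B₀ →⋆ₙₐ[ℂ] B₁) (πB : B₁ →⋆ₙₐ[ℂ] B₂) (hcB : IsShortExact ιB πB)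
    (ιC : C₀ →⋆ₙₐ[ℂ] C₁) (πC : C₁ →⋆ₙₐ[ℂ] C₂) (hcC : IsShortExact ιC πC)
    -- commuting squares
    (hsq₂ : ∀ p, x₂ (πA p) = πB (x₁ p))
    (hsq₃ : ∀ p, y₁ (ιB p) = ιC (y₀ p)) (hsq₄ : ∀ p, y₂ (πB p) = πC (y₁ p))
    -- the induced *-homomorphisms on the mapping cones of the columns
    (ωx : ↥(mapCone πA) →⋆ₙₐ[ℂ] ↥(mapCone πB))
    (hωx : ∀ p : ↥(mapCone πA), (ωx p).val.1 = x₁ p.val.1 ∧ ∀ t, (ωx p).val.2 t = x₂ (p.val.2 t))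
    (ωy : ↥(mapCone πB) →⋆ₙₐ[ℂ] ↥(mapCone πC))
    (hωy : ∀ p : ↥(mapCone πB), (ωy p).val.1 = y₁ p.val.1 ∧ ∀ t, (ωy p).val.2 t = y₂ (p.val.2 t)) :
    Function.Injective ωx ∧ Function.Surjective ωy ∧
    Set.range ωx = {p | ωy p = 0} := by
  have hωx : IsInducedMapConeHom ωx x₁ x₂ := hωx
  have hωy : IsInducedMapConeHom ωy y₁ y₂ := hωy
  exact ⟨hωx.injective hr₁.1 hr₂.1,
    hωy.surjective hr₂.2.1 (exists_preimage_of_pullback hr₀.2.1 hcB hcC hsq₃ hsq₄),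
    hωx.range_eq_ker hωy hr₁.2.2 hr₂.2.2 hr₂.1 hsq₂⟩

/-- The mapping cone functor sends short exact sequences of extensions to
short exact sequences. -/
theorem statement15 {A₀ A₁ A₂ B₀ B₁ B₂ C₀ C₁ C₂ : Type*}
    [NonUnitalCStarAlgebra A₀] [NonUnitalCStarAlgebra A₁] [NonUnitalCStarAlgebra A₂]
    [NonUnitalCStarAlgebra B₀] [NonUnitalCStarAlgebra B₁] [NonUnitalCStarAlgebra B₂]
    [NonUnitalCStarAlgebra C₀] [NonUnitalCStarAlgebra C₁] [NonUnitalCStarAlgebra C₂]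
    -- exact rows
    (x₀ : A₀ →⋆ₙₐ[ℂ] B₀) (y₀ : B₀ →⋆ₙₐ[ℂ] C₀) (hr₀ : IsShortExact x₀ y₀)
    (x₁ : A₁ →⋆ₙₐ[ℂ] B₁) (y₁ : B₁ →⋆ₙₐ[ℂ] C₁) (hr₁ : IsShortExact x₁ y₁)
    (x₂ : A₂ →⋆ₙₐ[ℂ] B₂) (y₂ : B₂ →⋆ₙₐ[ℂ] C₂) (hr₂ : IsShortExact x₂ y₂)
    -- exact columns
    (ιA : A₀ →⋆ₙₐ[ℂ] A₁) (πA : A₁ →⋆ₙₐ[ℂ] A₂) (hcA : IsShortExact ιA πA)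
    (ιB : B₀ →⋆ₙₐ[ℂ] B₁) (πB : B₁ →⋆ₙₐ[ℂ] B₂) (hcB : IsShortExact ιB πB)
    (ιC : C₀ →⋆ₙₐ[ℂ] C₁) (πC : C₁ →⋆ₙₐ[ℂ] C₂) (hcC : IsShortExact ιC πC)
    -- commuting squares
    (hsq₁ : ∀ p, x₁ (ιA p) = ιB (x₀ p)) (hsq₂ : ∀ p, x₂ (πA p) = πB (x₁ p))
    (hsq₃ : ∀ p, y₁ (ιB p) = ιC (y₀ p)) (hsq₄ : ∀ p, y₂ (πB p) = πC (y₁ p))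
    -- the induced *-homomorphisms on the mapping cones of the columns
    (ωx : ↥(mapCone πA) →⋆ₙₐ[ℂ] ↥(mapCone πB))
    (hωx : ∀ p : ↥(mapCone πA), (ωx p).val.1 = x₁ p.val.1 ∧ ∀ t, (ωx p).val.2 t = x₂ (p.val.2 t))
    (ωy : ↥(mapCone πB) →⋆ₙₐ[ℂ] ↥(mapCone πC))
    (hωy : ∀ p : ↥(mapCone πB), (ωy p).val.1 = y₁ p.val.1 ∧ ∀ t, (ωy p).val.2 t = y₂ (p.val.2 t)) :
    Function.Injective ωx ∧ Function.Surjective ωy ∧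
    Set.range ωx = {p | ωy p = 0} :=
  statement15_general x₀ y₀ hr₀ x₁ y₁ hr₁ x₂ y₂ hr₂ πA ιB πB hcB ιC πC hcC hsq₂ hsq₃ hsq₄ ωx hωx ωy
    hωy

end CStarPaper
end
end
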